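/- If a Hausdorff locally convex space E possesses a Schauder basis {e_i} (or even only a weak Schauder basis) with biorthogonal sequence {e'_i} ⊂ E', then every Fredholm operator F on E possesses a well-defined trace, the series ∑_{i=1}^∞ ⟨e'_i, F e_i⟩ (the matrix trace of F) converges, and tr F = ∑_{i=1}^∞ ⟨e'_i, F e_i⟩. -/

import Mathlib

/-
Setting: `E` is a Hausdorff locally convex topological vector space over `𝕜 = ℝ` or `ℂ`
(`RCLike 𝕜`), with `E' = E →L[𝕜] 𝕜` its (strong) dual.
-/

open Filter Topology Bornology

section Prelude

variable (𝕜 : Type) [RCLike 𝕜]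

/-- A continuous linear operator on `E` is of finite rank if its range is
finite-dimensional. -/
def IsFiniteRank {E : Type} [AddCommGroup E] [Module 𝕜 E] [TopologicalSpace E]
    (A : E →L[𝕜] E) : Prop :=
  FiniteDimensional 𝕜 (LinearMap.range (A : E →ₗ[𝕜] E))

/-- The ordinary trace `sp` of a (finite-rank) operator: the trace of the endomorphism
that it induces on its image. -/
noncomputable def sp {E : Type} [AddCommGroup E] [Module 𝕜 E] [TopologicalSpace E]
    (A : E →L[𝕜] E) : 𝕜 :=
  LinearMap.trace 𝕜 (LinearMap.range (A : E →ₗ[𝕜] E))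
    ((A : E →ₗ[𝕜] E).restrict (fun x _ => LinearMap.mem_range_self _ x))

/-- The bounded approximation property: there is a net of finite-rank operators that
converges to the identity operator in the weak operator topology and is bounded in
that topology. -/
def HasBAP (E : Type) [AddCommGroup E] [Module 𝕜 E] [TopologicalSpace E] : Prop :=
  ∃ (ι : Type) (lfil : Filter ι) (T : ι → E →L[𝕜] E), lfil.NeBot ∧
    (∀ ν, IsFiniteRank 𝕜 (T ν)) ∧
    (∀ (x : E) (f : E →L[𝕜] 𝕜), Tendsto (fun ν => f (T ν x)) lfil (𝓝 (f x))) ∧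
    (∀ (x : E) (f : E →L[𝕜] 𝕜), ∃ C : ℝ, ∀ ν, ‖f (T ν x)‖ ≤ C)

/-- The approximation property: the finite-rank operators are dense in `L(E)` for the
topology of uniform convergence on precompact (totally bounded) subsets of `E`. -/
def HasAP (E : Type) [AddCommGroup E] [Module 𝕜 E] [UniformSpace E] : Prop :=
  ∀ (A : E →L[𝕜] E) (S : Set E), TotallyBounded S → ∀ U ∈ 𝓝 (0 : E),
    ∃ F : E →L[𝕜] E, IsFiniteRank 𝕜 F ∧ ∀ x ∈ S, A x - F x ∈ U

/-- The weak approximation property: the finite-rank operators are dense in `L(E)` for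
the topology of uniform convergence on absolutely convex compact subsets of `E`. -/
def HasWeakAP (E : Type) [AddCommGroup E] [Module 𝕜 E] [Module ℝ E]
    [TopologicalSpace E] : Prop :=
  ∀ (A : E →L[𝕜] E) (K : Set E), IsCompact K → Balanced 𝕜 K → Convex ℝ K →
    ∀ U ∈ 𝓝 (0 : E), ∃ F : E →L[𝕜] E, IsFiniteRank 𝕜 F ∧ ∀ x ∈ K, A x - F x ∈ U

/-- A linear operator is weakly continuous iff the composition with every continuous
linear functional is again a continuous linear functional. -/
def IsWeaklyContinuous {E : Type} [AddCommGroup E] [Module 𝕜 E] [TopologicalSpace E]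
    (A : E →ₗ[𝕜] E) : Prop :=
  ∀ f : E →L[𝕜] 𝕜, Continuous fun v => f (A v)

/-- `B` is an absolutely convex bounded set such that the normed space `E_B`
(the span of `B` with the gauge of `B` as norm) is complete, i.e. a Banach disk.
(Completeness of the normed space `E_B` is expressed as sequential completeness for
the gauge of `B`, which is equivalent since `E_B` is metrizable.) -/
def IsBanachDisk {V : Type} [AddCommGroup V] [Module 𝕜 V] [Module ℝ V]
    [TopologicalSpace V] (B : Set V) : Prop :=
  Balanced 𝕜 B ∧ Convex ℝ B ∧ IsVonNBounded 𝕜 B ∧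
    ∀ u : ℕ → V, (∀ n, u n ∈ Submodule.span 𝕜 B) →
      (∀ ε : ℝ, 0 < ε → ∃ N : ℕ, ∀ m ≥ N, ∀ n ≥ N, gauge B (u m - u n) < ε) →
      ∃ v ∈ Submodule.span 𝕜 B, ∀ ε : ℝ, 0 < ε → ∃ N : ℕ, ∀ n ≥ N, gauge B (v - u n) < ε

/-- The data of a Fredholm kernel: a summable sequence of scalars, a sequence in a
Banach disk `B ⊆ E` and a sequence in a Banach disk `B' ⊆ E'`. -/
def FredholmKernelSeqs {E : Type} [AddCommGroup E] [Module 𝕜 E] [Module ℝ E]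
    [TopologicalSpace E] [IsTopologicalAddGroup E]
    (l : ℕ → 𝕜) (x : ℕ → E) (x' : ℕ → E →L[𝕜] 𝕜) : Prop :=
  (Summable fun i => ‖l i‖) ∧
  (∃ B : Set E, IsBanachDisk 𝕜 B ∧ ∀ i, x i ∈ B) ∧
  (∃ B' : Set (E →L[𝕜] 𝕜), IsBanachDisk 𝕜 B' ∧ ∀ i, x' i ∈ B')

/-- `A` is represented as the Fredholm operator `v ↦ ∑_{i=1}^∞ λ_i ⟨x'_i, v⟩ x_i`,
where `∑ |λ_i| < ∞`, `{x_i} ⊆ B ⊆ E` and `{x'_i} ⊆ B' ⊆ E'` with `B`, `B'` absolutely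
convex bounded sets such that `E_B` and `E'_{B'}` are complete. -/
def FredholmRep {E : Type} [AddCommGroup E] [Module 𝕜 E] [Module ℝ E]
    [TopologicalSpace E] [IsTopologicalAddGroup E]
    (A : E → E) (l : ℕ → 𝕜) (x : ℕ → E) (x' : ℕ → E →L[𝕜] 𝕜) : Prop :=
  FredholmKernelSeqs 𝕜 l x x' ∧
  ∀ v : E, Tendsto (fun n => ∑ i ∈ Finset.range n, (l i * x' i v) • x i) atTop (𝓝 (A v))

/-- `A` is represented as the nuclear operator `v ↦ ∑_{i=1}^∞ λ_i ⟨x'_i, v⟩ x_i`,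
where `∑ |λ_i| < ∞`, `{x_i}` lies in an absolutely convex bounded complete set `B ⊆ E`
and `{x'_i}` is equicontinuous, i.e. lies in the polar of a neighborhood of zero. -/
def NuclearRep {E : Type} [AddCommGroup E] [Module 𝕜 E] [Module ℝ E]
    [UniformSpace E] [IsUniformAddGroup E]
    (A : E → E) (l : ℕ → 𝕜) (x : ℕ → E) (x' : ℕ → E →L[𝕜] 𝕜) : Prop :=
  (Summable fun i => ‖l i‖) ∧
  (∃ B : Set E, Balanced 𝕜 B ∧ Convex ℝ B ∧ IsVonNBounded 𝕜 B ∧ IsComplete B ∧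
    ∀ i, x i ∈ B) ∧
  (∃ U ∈ 𝓝 (0 : E), ∀ i, ∀ v ∈ U, ‖(x' i) v‖ ≤ 1) ∧
  ∀ v : E, Tendsto (fun n => ∑ i ∈ Finset.range n, (l i * x' i v) • x i) atTop (𝓝 (A v))

end Prelude

/-!
Put `S n = ∑_{j<n} e'_j ⊗ e_j`. Exchanging a finite sum with the convergent series defining `F`,
the `n`-th partial matrix trace is `∑_i λ_i ⟨x'_i, S n x_i⟩`. The weak expansion makes the family
`S n` pointwise weakly bounded; two applications of the uniform boundedness principle, in the
Banach spaces `E_B` and `E'_{B'}`, upgrade this to `|⟨x'_i, S n x_i⟩| ≤ M` for all `n, i`, and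
dominated convergence gives the limit `∑_i λ_i ⟨x'_i, x_i⟩`. Being a limit of quantities depending
on `F` alone, this value does not depend on the representation.
-/

open scoped Pointwise

section GaugeOnSpan

variable {𝕜 : Type} [RCLike 𝕜] {V : Type} [AddCommGroup V] [Module 𝕜 V] [Module ℝ V]
  [IsScalarTower ℝ 𝕜 V] {B : Set V}

theorem exists_mem_smul_of_mem_span (hbal : Balanced 𝕜 B) (hconv : Convex ℝ B)
    (hne : B.Nonempty) {x : V} (hx : x ∈ Submodule.span 𝕜 B) :
    ∃ r : ℝ, 0 ≤ r ∧ x ∈ r • B := by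
  induction hx using Submodule.span_induction with
  | mem y hy => exact ⟨1, zero_le_one, by rwa [one_smul]⟩
  | zero => exact ⟨0, le_rfl, by rw [Set.zero_smul_set hne]; rfl⟩
  | add y z _ _ hy hz =>
    obtain ⟨r, hr, hyr⟩ := hy
    obtain ⟨s, hs, hzs⟩ := hz
    exact ⟨r + s, add_nonneg hr hs, hconv.add_smul hr hs ▸ Set.add_mem_add hyr hzs⟩
  | smul c y _ hy =>
    obtain ⟨r, hr, hyr⟩ := hy
    have hc : c • B ⊆ ‖c‖ • B := hbal.smul_mono (by simp)
    refine ⟨r * ‖c‖, by positivity, ?_⟩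
    rw [mul_smul]
    exact Set.smul_set_mono hc (smul_comm c r B ▸ Set.smul_mem_smul_set hyr)

theorem absorbent_preimage_span (hbal : Balanced 𝕜 B) (hconv : Convex ℝ B) (hne : B.Nonempty) :
    Absorbent ℝ ((↑) ⁻¹' B : Set (Submodule.span 𝕜 B)) := by
  have hbalℝ : Balanced ℝ B := (balanced_iff_neg_mem hconv).mpr fun _ => hbal.neg_mem_iff.mpr
  intro w
  obtain ⟨r, hr, hw⟩ := exists_mem_smul_of_mem_span hbal hconv hne w.2
  refine Absorbs.of_norm ⟨r + 1, fun c hc => Set.singleton_subset_iff.mpr ?_⟩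
  have hc₀ : c ≠ 0 := norm_pos_iff.mp (by linarith)
  have hwc : (w : V) ∈ c • B := hbalℝ.smul_mono (by rw [Real.norm_of_nonneg hr]; linarith) hw
  rw [Set.mem_smul_set_iff_inv_smul_mem₀ hc₀] at hwc ⊢
  exact hwc

theorem gauge_preimage_span (w : Submodule.span 𝕜 B) :
    gauge ((↑) ⁻¹' B : Set (Submodule.span 𝕜 B)) w = gauge B (w : V) := by
  simp only [gauge_def']
  rfl

end GaugeOnSpan

theorem LinearMap.norm_le_mul_gauge {W F : Type} [AddCommGroup W] [Module ℝ W]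
    [SeminormedAddCommGroup F] [NormedSpace ℝ F] {s : Set W} (hs : Absorbent ℝ s)
    (f : W →ₗ[ℝ] F) {C : ℝ} (hC : ∀ y ∈ s, ‖f y‖ ≤ C) (x : W) : ‖f x‖ ≤ C * gauge s x := by
  have hC₀ : 0 ≤ C := by simpa using hC 0 hs.zero_mem
  refine ge_of_tendsto
    ((continuous_const_mul C).continuousWithinAt (s := Set.Ioi (gauge s x)) |>.tendsto)
    (eventually_nhdsWithin_of_forall fun r (hr : gauge s x < r) => ?_)
  obtain ⟨b, hb₀, hbr, y, hy, rfl⟩ := exists_lt_of_gauge_lt hs hr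
  rw [map_smul, norm_smul, Real.norm_of_nonneg hb₀.le, mul_comm]
  exact mul_le_mul (hC y hy) hbr.le hb₀.le hC₀

namespace Seminorm

variable {𝕜 : Type} [RCLike 𝕜] {W : Type} [AddCommGroup W] [Module 𝕜 W]

def IsSeqComplete (p : Seminorm 𝕜 W) : Prop :=
  ∀ u : ℕ → W, (∀ ε : ℝ, 0 < ε → ∃ N, ∀ m ≥ N, ∀ n ≥ N, p (u m - u n) < ε) →
    ∃ v, ∀ ε : ℝ, 0 < ε → ∃ N, ∀ n ≥ N, p (v - u n) < ε

theorem IsSeqComplete.banach_steinhaus {p : Seminorm 𝕜 W} (hp : p.IsSeqComplete) {ι : Type}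
    (g : ι → W →ₗ[𝕜] 𝕜) (hg : ∀ i, ∃ C, ∀ w, ‖g i w‖ ≤ C * p w)
    (hpt : ∀ w, ∃ C, ∀ i, ‖g i w‖ ≤ C) :
    ∃ C, ∀ i w, p w ≤ 1 → ‖g i w‖ ≤ C := by
  let _ : SeminormedAddCommGroup W := p.toAddGroupSeminorm.toSeminormedAddCommGroup
  let _ : NormedSpace 𝕜 W := ⟨fun c w => (map_smul_eq_mul p c w).le⟩
  have hdist : ∀ v w : W, dist v w = p (v - w) := fun _ _ => dist_eq_norm _ _
  have : CompleteSpace W := by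
    refine Metric.complete_of_cauchySeq_tendsto fun u hu => ?_
    obtain ⟨v, hv⟩ := hp u fun ε hε => by simpa only [hdist] using Metric.cauchySeq_iff.mp hu ε hε
    refine ⟨v, Metric.tendsto_atTop.mpr fun ε hε => ?_⟩
    simpa only [dist_comm _ v, hdist] using hv ε hε
  let G i := (g i).mkContinuousOfExistsBound (hg i)
  obtain ⟨C, hC⟩ := _root_.banach_steinhaus (g := G) hpt
  refine ⟨C, fun i w hw => ?_⟩
  calc ‖g i w‖ = ‖G i w‖ := rfl
    _ ≤ C * ‖w‖ := (G i).le_of_opNorm_le (hC i) w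
    _ ≤ C := mul_le_of_le_one_right ((norm_nonneg _).trans (hC i)) hw

end Seminorm

theorem IsBanachDisk.banach_steinhaus {𝕜 : Type} [RCLike 𝕜] {V : Type} [AddCommGroup V]
    [Module 𝕜 V] [Module ℝ V] [IsScalarTower ℝ 𝕜 V] [TopologicalSpace V]
    [IsTopologicalAddGroup V] {B : Set V} (hB : IsBanachDisk 𝕜 B) {ι : Type}
    (g : ι → V →L[𝕜] 𝕜) (hpt : ∀ v ∈ Submodule.span 𝕜 B, ∃ C, ∀ i, ‖g i v‖ ≤ C) :
    ∃ C, ∀ i, ∀ b ∈ B, ‖g i b‖ ≤ C := by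
  obtain ⟨hbal, hconv, hbdd, hcompl⟩ := hB
  rcases B.eq_empty_or_nonempty with rfl | hne
  · exact ⟨0, by simp⟩
  have habs := absorbent_preimage_span hbal hconv hne
  have hbal' : Balanced 𝕜 ((↑) ⁻¹' B : Set (Submodule.span 𝕜 B)) :=
    hbal.mulActionHom_preimage (Submodule.span 𝕜 B).subtype.toMulActionHom
  have hconv' : Convex ℝ ((↑) ⁻¹' B : Set (Submodule.span 𝕜 B)) :=
    hconv.linear_preimage ((Submodule.span 𝕜 B).subtype.restrictScalars ℝ)
  -- the norm of the Banach space `E_B`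
  let p : Seminorm 𝕜 (Submodule.span 𝕜 B) := gaugeSeminorm hbal' hconv' habs
  have hp : ∀ w, p w = gauge B (w : V) := gauge_preimage_span
  have hpcompl : p.IsSeqComplete := fun u hu => by
    obtain ⟨v, hv, hlim⟩ := hcompl (fun n => u n) (fun n => (u n).2)
      (by simpa only [hp, Submodule.coe_sub] using hu)
    exact ⟨⟨v, hv⟩, by simpa only [hp, Submodule.coe_sub] using hlim⟩
  let g' i : Submodule.span 𝕜 B →ₗ[𝕜] 𝕜 := (g i : V →ₗ[𝕜] 𝕜).comp (Submodule.span 𝕜 B).subtype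
  have hg' : ∀ i, ∃ C, ∀ w, ‖g' i w‖ ≤ C * p w := fun i => by
    obtain ⟨C, hC⟩ := (NormedSpace.image_isVonNBounded_iff 𝕜).mp (hbdd.image (g i))
    exact ⟨C, LinearMap.norm_le_mul_gauge habs ((g' i).restrictScalars ℝ) fun y => hC y⟩
  obtain ⟨C, hC⟩ := hpcompl.banach_steinhaus g' hg' fun w => hpt w w.2
  exact ⟨C, fun i b hb => hC i ⟨b, Submodule.subset_span hb⟩
    ((hp _).trans_le (gauge_le_one_of_mem hb))⟩

theorem tendsto_sum_mul_apply_sum_smul {𝕜 : Type} [RCLike 𝕜] {E : Type} [AddCommGroup E]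
    [Module 𝕜 E] [TopologicalSpace E] {F : E → E} {l : ℕ → 𝕜} {x : ℕ → E}
    {x' : ℕ → E →L[𝕜] 𝕜}
    (hF : ∀ v, Tendsto (fun n => ∑ i ∈ Finset.range n, (l i * x' i v) • x i) atTop (𝓝 (F v)))
    {κ : Type} (s : Finset κ) (u : κ → E) (φ : κ → E →L[𝕜] 𝕜) :
    Tendsto (fun n => ∑ i ∈ Finset.range n, l i * x' i (∑ j ∈ s, φ j (x i) • u j)) atTop
      (𝓝 (∑ j ∈ s, φ j (F (u j)))) := by
  have hφ : ∀ j, Tendsto (fun n => ∑ i ∈ Finset.range n, l i * x' i (u j) * φ j (x i)) atTop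
      (𝓝 (φ j (F (u j)))) := fun j => by
    simpa only [Function.comp_def, map_sum, map_smul, smul_eq_mul] using
      ((φ j).continuous.tendsto _).comp (hF (u j))
  refine (tendsto_finsetSum s fun j _ => hφ j).congr fun n => ?_
  simp only [map_sum, map_smul, smul_eq_mul, Finset.mul_sum]
  rw [Finset.sum_comm]
  exact Finset.sum_congr rfl fun i _ => Finset.sum_congr rfl fun j _ => by ring

section FredholmTrace

variable {𝕜 : Type} [RCLike 𝕜] {E : Type} [AddCommGroup E] [Module 𝕜 E] [TopologicalSpace E]
  [IsTopologicalAddGroup E] [ContinuousSMul 𝕜 E] [Module ℝ E] [IsScalarTower ℝ 𝕜 E]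

theorem exists_bound_apply_apply_of_isBanachDisk {ι : Type} {S : ι → E →L[𝕜] E}
    (hS : ∀ (v : E) (f : E →L[𝕜] 𝕜), ∃ C, ∀ n, ‖f (S n v)‖ ≤ C)
    {B : Set E} (hB : IsBanachDisk 𝕜 B) {B' : Set (E →L[𝕜] 𝕜)} (hB' : IsBanachDisk 𝕜 B') :
    ∃ M, ∀ n, ∀ b ∈ B, ∀ b' ∈ B', ‖b' (S n b)‖ ≤ M := by
  have hSB : ∀ f : E →L[𝕜] 𝕜, ∃ C, ∀ n, ∀ b ∈ B, ‖f (S n b)‖ ≤ C := fun f =>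
    hB.banach_steinhaus (fun n => f.comp (S n)) fun v _ => hS v f
  -- evaluation at `v`, continuous on `E'` as the strong topology is finer than the pointwise one
  let ev : E → (E →L[𝕜] 𝕜) →L[𝕜] 𝕜 := fun v => (PointwiseConvergenceCLM.evalCLM _ _ v).comp
    (ContinuousLinearMap.toPointwiseConvergenceCLM 𝕜 (RingHom.id 𝕜) E 𝕜)
  obtain ⟨M, hM⟩ := hB'.banach_steinhaus (fun nb : ι × B => ev (S nb.1 nb.2)) fun f _ => by
    obtain ⟨C, hC⟩ := hSB f
    exact ⟨C, fun nb => hC nb.1 nb.2 nb.2.2⟩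
  exact ⟨M, fun n b hb b' hb' => hM (n, ⟨b, hb⟩) b' hb'⟩

theorem FredholmRep.tendsto_sum_apply_basis {e : ℕ → E} {e' : ℕ → E →L[𝕜] 𝕜}
    (hexp : ∀ (v : E) (f : E →L[𝕜] 𝕜),
      Tendsto (fun n => f (∑ i ∈ Finset.range n, (e' i v) • e i)) atTop (𝓝 (f v)))
    {F : E → E} {l : ℕ → 𝕜} {x : ℕ → E} {x' : ℕ → E →L[𝕜] 𝕜} (hrep : FredholmRep 𝕜 F l x x') :
    Tendsto (fun n => ∑ i ∈ Finset.range n, e' i (F (e i))) atTop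
      (𝓝 (∑' i, l i * x' i (x i))) := by
  obtain ⟨⟨hl, ⟨B, hB, hxB⟩, ⟨B', hB', hx'B⟩⟩, hF⟩ := hrep
  let S n : E →L[𝕜] E := ∑ j ∈ Finset.range n, (e' j).smulRight (e j)
  have hS_apply : ∀ n v, S n v = ∑ j ∈ Finset.range n, e' j v • e j := fun n v => by simp [S]
  have hS : ∀ v (f : E →L[𝕜] 𝕜), Tendsto (fun n => f (S n v)) atTop (𝓝 (f v)) := fun v f => by
    simpa only [hS_apply] using hexp v f
  obtain ⟨M, hM⟩ := exists_bound_apply_apply_of_isBanachDisk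
    (fun v f => ((hS v f).norm.bddAbove_range).imp fun C hC n => hC ⟨n, rfl⟩) hB hB'
  have hbound : ∀ n i, ‖l i * x' i (S n (x i))‖ ≤ ‖l i‖ * M := fun n i => by
    rw [norm_mul]
    exact mul_le_mul_of_nonneg_left (hM n _ (hxB i) _ (hx'B i)) (norm_nonneg _)
  have htrace : ∀ n, ∑ j ∈ Finset.range n, e' j (F (e j)) = ∑' i, l i * x' i (S n (x i)) :=
    fun n => tendsto_nhds_unique
      (by simpa only [hS_apply] using tendsto_sum_mul_apply_sum_smul hF (Finset.range n) e e')
      (Summable.of_norm_bounded (hl.mul_right M) (hbound n)).hasSum.tendsto_sum_nat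
  simp only [htrace]
  exact tendsto_tsum_of_dominated_convergence (hl.mul_right M)
    (fun i => (hS (x i) (x' i)).const_mul (l i)) (.of_forall hbound)

end FredholmTrace

variable {𝕜 : Type} [RCLike 𝕜] {E : Type} [AddCommGroup E] [Module 𝕜 E]
  [UniformSpace E] [IsUniformAddGroup E] [ContinuousSMul 𝕜 E]
  [Module ℝ E] [IsScalarTower ℝ 𝕜 E] [LocallyConvexSpace ℝ E] [T2Space E]

theorem statement18_general (e : ℕ → E) (e' : ℕ → E →L[𝕜] 𝕜)
    (hexp : ∀ (x : E) (f : E →L[𝕜] 𝕜),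
      Filter.Tendsto (fun n => f (∑ i ∈ Finset.range n, (e' i x) • e i))
        Filter.atTop (𝓝 (f x))) :
    (∀ (F : E → E) (l : ℕ → 𝕜) (x : ℕ → E) (x' : ℕ → E →L[𝕜] 𝕜)
        (μ : ℕ → 𝕜) (y : ℕ → E) (y' : ℕ → E →L[𝕜] 𝕜),
      FredholmRep 𝕜 F l x x' → FredholmRep 𝕜 F μ y y' →
      ∑' i, l i * x' i (x i) = ∑' j, μ j * y' j (y j)) ∧
    (∀ (F : E → E) (l : ℕ → 𝕜) (x : ℕ → E) (x' : ℕ → E →L[𝕜] 𝕜),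
      FredholmRep 𝕜 F l x x' →
      Filter.Tendsto (fun n => ∑ i ∈ Finset.range n, e' i (F (e i))) Filter.atTop
        (𝓝 (∑' i, l i * x' i (x i)))) :=
  ⟨fun _ _ _ _ _ _ _ h₁ h₂ => tendsto_nhds_unique (h₁.tendsto_sum_apply_basis hexp)
      (h₂.tendsto_sum_apply_basis hexp),
    fun _ _ _ _ h => h.tendsto_sum_apply_basis hexp⟩

/-- If `E` possesses a Schauder basis `{e_i}` (or even only a weak
Schauder basis) with biorthogonal sequence `{e'_i} ⊆ E'`, then every Fredholm operator
`F` on `E` possesses a well-defined trace (any two Fredholm representations yield the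
same value), the matrix-trace series `∑_{i=1}^∞ ⟨e'_i, F e_i⟩` converges, and
`tr F = ∑_{i=1}^∞ ⟨e'_i, F e_i⟩`. -/
theorem statement18 (e : ℕ → E) (e' : ℕ → E →L[𝕜] 𝕜)
    (hexp : ∀ (x : E) (f : E →L[𝕜] 𝕜),
      Filter.Tendsto (fun n => f (∑ i ∈ Finset.range n, (e' i x) • e i))
        Filter.atTop (𝓝 (f x)))
    (huniq : ∀ (x : E) (ξ : ℕ → 𝕜),
      (∀ f : E →L[𝕜] 𝕜, Filter.Tendsto (fun n => f (∑ i ∈ Finset.range n, ξ i • e i))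
          Filter.atTop (𝓝 (f x))) →
      ∀ i, ξ i = e' i x) :
    (∀ (F : E → E) (l : ℕ → 𝕜) (x : ℕ → E) (x' : ℕ → E →L[𝕜] 𝕜)
        (μ : ℕ → 𝕜) (y : ℕ → E) (y' : ℕ → E →L[𝕜] 𝕜),
      FredholmRep 𝕜 F l x x' → FredholmRep 𝕜 F μ y y' →
      ∑' i, l i * x' i (x i) = ∑' j, μ j * y' j (y j)) ∧
    (∀ (F : E → E) (l : ℕ → 𝕜) (x : ℕ → E) (x' : ℕ → E →L[𝕜] 𝕜),
      FredholmRep 𝕜 F l x x' →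
      Filter.Tendsto (fun n => ∑ i ∈ Finset.range n, e' i (F (e i))) Filter.atTop
        (𝓝 (∑' i, l i * x' i (x i)))) :=
  statement18_general e e' hexp
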